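/- For every temperature T > 0, every cost function C : 𝒱 → ℝ, and every initial state S₀ ∈ 𝒱, the distribution of the chain converges to the Gibbs distribution: for every S ∈ 𝒱, the (S₀, S) entry of the t-th matrix power P_T^t converges to π_T(S) as t → ∞. -/
import Mathlib


open Finset

variable {V : Type*} [Fintype V] [DecidableEq V]

/-- The collection of sets obtained from `S` by adding one new vertex. -/
def N1 (S : Finset V) : Finset (Finset V) := Sᶜ.image fun x => insert x S

/-- The collection of sets obtained from `S` by removing one vertex. -/
def N2 (S : Finset V) : Finset (Finset V) := S.image fun x => S.erase x

/-- The collection of sets obtained from `S` by swapping one vertex of `S`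
with one vertex outside `S`. -/
def N3 (S : Finset V) : Finset (Finset V) :=
  (Sᶜ ×ˢ S).image fun p => (insert p.1 S).erase p.2

/-- Off-diagonal transition probabilities of the Metropolis chain. -/
noncomputable def Poff (C : Finset V → ℝ) (T : ℝ) (S S' : Finset V) : ℝ :=
  if S' ∈ N1 S ∪ N2 S then
    (2 / (3 * (Fintype.card V : ℝ))) * min (Real.exp ((C S - C S') / T)) 1
  else if S' ∈ N3 S then
    (1 / (3 * (S.card : ℝ) * ((Fintype.card V : ℝ) - (S.card : ℝ)))) *
      min (Real.exp ((C S - C S') / T)) 1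
  else 0

/-- The transition matrix `P_T` of the Metropolis chain: off the diagonal it is
given by `Poff`, and the diagonal entry is `1` minus the sum of the off-diagonal
entries in the row. -/
noncomputable def Ptrans (C : Finset V → ℝ) (T : ℝ) (S S' : Finset V) : ℝ :=
  if S' = S then 1 - ∑ S'' ∈ univ.erase S, Poff C T S S''
  else Poff C T S S'

/-- The Gibbs distribution at temperature `T` for the cost function `C`. -/
noncomputable def gibbs (C : Finset V → ℝ) (T : ℝ) (S : Finset V) : ℝ :=
  Real.exp (-C S / T) / ∑ S₁ : Finset V, Real.exp (-C S₁ / T)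


section Abstract
open Filter

variable {α : Type*} [Fintype α] [DecidableEq α] [Nonempty α]

lemma pow_entry_nonneg {P : Matrix α α ℝ} (h0 : ∀ i j, 0 ≤ P i j) (m : ℕ) :
    ∀ i j, 0 ≤ (P ^ m) i j := by
  induction m with
  | zero =>
    intro i j
    rw [pow_zero]
    by_cases h : i = j
    · subst h; rw [Matrix.one_apply_eq]; norm_num
    · rw [Matrix.one_apply_ne h]
  | succ m ih =>
    intro i j
    rw [pow_succ, Matrix.mul_apply]
    exact Finset.sum_nonneg fun l _ => mul_nonneg (ih i l) (h0 l j)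

lemma pow_row_sum {P : Matrix α α ℝ} (h1 : ∀ i, ∑ j, P i j = 1) (m : ℕ) :
    ∀ i, ∑ j, (P ^ m) i j = 1 := by
  induction m with
  | zero =>
    intro i
    simp [Matrix.one_apply]
  | succ m ih =>
    intro i
    simp only [pow_succ, Matrix.mul_apply]
    rw [Finset.sum_comm]
    simp only [← Finset.mul_sum, h1]
    simpa using ih i

lemma pow_stationary {P : Matrix α α ℝ} {π : α → ℝ}
    (hst : ∀ j, ∑ i, π i * P i j = π j) (m : ℕ) :
    ∀ j, ∑ i, π i * (P ^ m) i j = π j := by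
  induction m with
  | zero =>
    intro j
    simp [Matrix.one_apply]
  | succ m ih =>
    intro j
    simp only [pow_succ, Matrix.mul_apply, Finset.mul_sum]
    rw [Finset.sum_comm]
    simp only [← mul_assoc, ← Finset.sum_mul, ih]
    exact hst j

lemma entry_mul_ge {M N : Matrix α α ℝ} (hM : ∀ i j, 0 ≤ M i j) (hN : ∀ i j, 0 ≤ N i j)
    (a c b : α) : M a c * N c b ≤ (M * N) a b := by
  rw [Matrix.mul_apply]
  exact Finset.single_le_sum (fun l _ => mul_nonneg (hM a l) (hN l b)) (mem_univ c)

lemma markov_converge {P : Matrix α α ℝ} {π : α → ℝ} {k : ℕ}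
    (h0 : ∀ i j, 0 ≤ P i j) (h1 : ∀ i, ∑ j, P i j = 1)
    (hst : ∀ j, ∑ i, π i * P i j = π j) (hπ1 : ∑ i, π i = 1)
    (hk : 1 ≤ k) (hpos : ∀ i j, 0 < (P ^ k) i j) (i₀ : α) (j : α) :
    Tendsto (fun t => (P ^ t) i₀ j) atTop (nhds (π j)) := by
  classical
  -- minimal entry of P^k
  obtain ⟨p, -, hp⟩ := Finset.exists_min_image (univ : Finset (α × α))
    (fun p => (P ^ k) p.1 p.2) ⟨(Classical.arbitrary α, Classical.arbitrary α), mem_univ _⟩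
  set ε : ℝ := (P ^ k) p.1 p.2 with hε
  have hε0 : 0 < ε := hpos _ _
  have hεle : ∀ i j', ε ≤ (P ^ k) i j' := fun i j' => hp (i, j') (mem_univ _)
  have hQsum : ∀ i, ∑ j', (P ^ k) i j' = 1 := pow_row_sum h1 k
  have hcard : (Fintype.card α : ℝ) * ε ≤ 1 := by
    have := hQsum (Classical.arbitrary α)
    calc (Fintype.card α : ℝ) * ε = ∑ _j' : α, ε := by
          rw [Finset.sum_const, nsmul_eq_mul]; simp
      _ ≤ ∑ j', (P ^ k) (Classical.arbitrary α) j' :=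
          Finset.sum_le_sum fun j' _ => hεle _ j'
      _ = 1 := this
  set c : ℝ := 1 - (Fintype.card α : ℝ) * ε with hc
  have hc0 : 0 ≤ c := by simp [hc]; linarith
  have hc1 : c < 1 := by
    have : (0 : ℝ) < (Fintype.card α : ℝ) * ε :=
      mul_pos (by exact_mod_cast Fintype.card_pos) hε0
    simp [hc]; linarith
  set g : ℕ → α → ℝ := fun t l => (P ^ t) i₀ l - π l with hg
  set D : ℕ → ℝ := fun t => ∑ l, |g t l| with hD
  have hD0 : ∀ t, 0 ≤ D t := fun t => Finset.sum_nonneg fun l _ => abs_nonneg _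
  have sum_g : ∀ t, ∑ l, g t l = 0 := by
    intro t
    simp only [hg, Finset.sum_sub_distrib, pow_row_sum h1 t i₀, hπ1, sub_self]
  have step : ∀ t m l, g (t + m) l = ∑ i, g t i * (P ^ m) i l := by
    intro t m l
    simp only [hg]
    rw [pow_add, Matrix.mul_apply]
    simp only [sub_mul, Finset.sum_sub_distrib, pow_stationary hst m l]
  have nonexpand : ∀ t m, D (t + m) ≤ D t := by
    intro t m
    calc D (t + m) = ∑ l, |∑ i, g t i * (P ^ m) i l| := by
          simp only [hD]; exact Finset.sum_congr rfl fun l _ => by rw [step t m l]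
      _ ≤ ∑ l, ∑ i, |g t i| * (P ^ m) i l := by
          refine Finset.sum_le_sum fun l _ => ?_
          refine (Finset.abs_sum_le_sum_abs _ _).trans ?_
          refine Finset.sum_le_sum fun i _ => ?_
          rw [abs_mul, abs_of_nonneg (pow_entry_nonneg h0 m i l)]
      _ = ∑ i, |g t i| * ∑ l, (P ^ m) i l := by
          rw [Finset.sum_comm]; simp [Finset.mul_sum]
      _ = D t := by simp only [pow_row_sum h1 m]; simp [hD]
  have contract : ∀ t, D (t + k) ≤ c * D t := by
    intro t
    have key : ∀ l, g (t + k) l = ∑ i, g t i * ((P ^ k) i l - ε) := by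
      intro l
      rw [step t k l]
      simp only [mul_sub, Finset.sum_sub_distrib, ← Finset.sum_mul, sum_g t, zero_mul, sub_zero]
    calc D (t + k) = ∑ l, |∑ i, g t i * ((P ^ k) i l - ε)| := by
          simp only [hD]; exact Finset.sum_congr rfl fun l _ => by rw [key l]
      _ ≤ ∑ l, ∑ i, |g t i| * ((P ^ k) i l - ε) := by
          refine Finset.sum_le_sum fun l _ => ?_
          refine (Finset.abs_sum_le_sum_abs _ _).trans ?_
          refine Finset.sum_le_sum fun i _ => ?_
          rw [abs_mul, abs_of_nonneg (sub_nonneg.mpr (hεle i l))]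
      _ = ∑ i, |g t i| * (1 - (Fintype.card α : ℝ) * ε) := by
          rw [Finset.sum_comm]
          refine Finset.sum_congr rfl fun i _ => ?_
          rw [← Finset.mul_sum, Finset.sum_sub_distrib, hQsum i]
          simp [mul_comm]
      _ = c * D t := by rw [← Finset.sum_mul]; simp only [hD, hc]; ring
  have Dk : ∀ m, D (k * m) ≤ c ^ m * D 0 := by
    intro m
    induction m with
    | zero => simp
    | succ m ih =>
      have : D (k * m + k) ≤ c * D (k * m) := contract (k * m)
      calc D (k * (m + 1)) = D (k * m + k) := by ring_nf
        _ ≤ c * D (k * m) := this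
        _ ≤ c * (c ^ m * D 0) := mul_le_mul_of_nonneg_left ih hc0
        _ = c ^ (m + 1) * D 0 := by ring
  have Dbound : ∀ t, D t ≤ c ^ (t / k) * D 0 := by
    intro t
    have h := Nat.div_add_mod t k
    calc D t = D (k * (t / k) + t % k) := by rw [h]
      _ ≤ D (k * (t / k)) := nonexpand _ _
      _ ≤ c ^ (t / k) * D 0 := Dk _
  have hdivtop : Tendsto (fun t : ℕ => t / k) atTop atTop := by
    refine tendsto_atTop_atTop.mpr fun b => ⟨b * k, fun t ht => ?_⟩
    exact (Nat.le_div_iff_mul_le hk).mpr ht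
  have hDto : Tendsto D atTop (nhds 0) := by
    have h1' : Tendsto (fun t : ℕ => c ^ (t / k) * D 0) atTop (nhds (0 * D 0)) :=
      Tendsto.mul_const _ ((tendsto_pow_atTop_nhds_zero_of_lt_one hc0 hc1).comp hdivtop)
    rw [zero_mul] at h1'
    exact squeeze_zero hD0 Dbound h1'
  have hgto : Tendsto (fun t => g t j) atTop (nhds 0) := by
    refine squeeze_zero_norm (fun t => ?_) hDto
    exact Finset.single_le_sum (fun l _ => abs_nonneg (g t l)) (mem_univ j)
  have := hgto.add_const (π j)
  rw [zero_add] at this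
  simpa [hg] using this
end Abstract



-- membership characterizations
lemma mem_N1_iff {S S' : Finset V} : S' ∈ N1 S ↔ ∃ x, x ∉ S ∧ S' = insert x S := by
  simp [N1, eq_comm]

lemma mem_N2_iff {S S' : Finset V} : S' ∈ N2 S ↔ ∃ x, x ∈ S ∧ S' = S.erase x := by
  simp [N2, eq_comm]

lemma mem_N3_iff {S S' : Finset V} :
    S' ∈ N3 S ↔ ∃ x x', x ∉ S ∧ x' ∈ S ∧ S' = (insert x S).erase x' := by
  simp only [N3, mem_image, mem_product, mem_compl, Prod.exists]
  constructor
  · rintro ⟨x, x', ⟨hx, hx'⟩, h⟩; exact ⟨x, x', hx, hx', h.symm⟩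
  · rintro ⟨x, x', hx, hx', h⟩; exact ⟨x, x', ⟨hx, hx'⟩, h.symm⟩

lemma card_N1 {S S' : Finset V} (h : S' ∈ N1 S) : S'.card = S.card + 1 := by
  obtain ⟨x, hx, rfl⟩ := mem_N1_iff.mp h
  exact card_insert_of_notMem hx

lemma card_N2 {S S' : Finset V} (h : S' ∈ N2 S) : S'.card + 1 = S.card := by
  obtain ⟨x, hx, rfl⟩ := mem_N2_iff.mp h
  exact card_erase_add_one hx

lemma card_N3 {S S' : Finset V} (h : S' ∈ N3 S) : S'.card = S.card := by
  obtain ⟨x, x', hx, hx', rfl⟩ := mem_N3_iff.mp h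
  have hx'' : x' ∈ insert x S := mem_insert_of_mem hx'
  have := card_erase_add_one hx''
  rw [card_insert_of_notMem hx] at this
  omega

lemma N1_symm {S S' : Finset V} (h : S' ∈ N1 S) : S ∈ N2 S' := by
  obtain ⟨x, hx, rfl⟩ := mem_N1_iff.mp h
  exact mem_N2_iff.mpr ⟨x, mem_insert_self x S, (erase_insert hx).symm⟩

lemma N2_symm {S S' : Finset V} (h : S' ∈ N2 S) : S ∈ N1 S' := by
  obtain ⟨x, hx, rfl⟩ := mem_N2_iff.mp h
  exact mem_N1_iff.mpr ⟨x, notMem_erase x S, (insert_erase hx).symm⟩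

lemma N3_symm {S S' : Finset V} (h : S' ∈ N3 S) : S ∈ N3 S' := by
  obtain ⟨x, x', hx, hx', rfl⟩ := mem_N3_iff.mp h
  have hne : x ≠ x' := fun h => hx (h ▸ hx')
  refine mem_N3_iff.mpr ⟨x', x, ?_, ?_, ?_⟩
  · exact notMem_erase x' _
  · exact mem_erase.mpr ⟨hne, mem_insert_self x S⟩
  · rw [insert_erase (mem_insert_of_mem hx'), erase_insert hx]

lemma N12_symm {S S' : Finset V} (h : S' ∈ N1 S ∪ N2 S) : S ∈ N1 S' ∪ N2 S' := by
  rcases mem_union.mp h with h | h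
  · exact mem_union_right _ (N1_symm h)
  · exact mem_union_left _ (N2_symm h)

lemma N3_not_N12 {S S' : Finset V} (h : S' ∈ N3 S) : S' ∉ N1 S ∪ N2 S := by
  intro h'
  have hc := card_N3 h
  rcases mem_union.mp h' with h'' | h''
  · have := card_N1 h''; omega
  · have := card_N2 h''; omega

-- Metropolis identity
lemma metro {a b T : ℝ} (hT : 0 < T) :
    Real.exp (-a / T) * min (Real.exp ((a - b) / T)) 1 =
      min (Real.exp (-b / T)) (Real.exp (-a / T)) := by
  rw [mul_min_of_nonneg _ _ (Real.exp_nonneg _), mul_one, ← Real.exp_add]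
  congr 2
  field_simp
  ring

lemma Poff_rev (C : Finset V → ℝ) (T : ℝ) (hT : 0 < T) (S S' : Finset V) :
    Real.exp (-C S / T) * Poff C T S S' = Real.exp (-C S' / T) * Poff C T S' S := by
  by_cases h1 : S' ∈ N1 S ∪ N2 S
  · have h1' : S ∈ N1 S' ∪ N2 S' := N12_symm h1
    rw [Poff, if_pos h1, Poff, if_pos h1']
    rw [mul_comm (2 / (3 * (Fintype.card V : ℝ))), ← mul_assoc, metro hT,
        mul_comm (2 / (3 * (Fintype.card V : ℝ))), ← mul_assoc, metro hT, min_comm]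
  · by_cases h3 : S' ∈ N3 S
    · have h3' : S ∈ N3 S' := N3_symm h3
      have h1' : S ∉ N1 S' ∪ N2 S' := by
        intro h'
        have hc := card_N3 h3
        rcases mem_union.mp h' with h'' | h''
        · have := card_N1 h''; omega
        · have := card_N2 h''; omega
      have hcard : S'.card = S.card := card_N3 h3
      rw [Poff, if_neg h1, if_pos h3, Poff, if_neg h1', if_pos h3', hcard]
      rw [mul_comm (1 / (3 * (S.card : ℝ) * _)), ← mul_assoc, metro hT,
          mul_comm (1 / (3 * (S.card : ℝ) * _)), ← mul_assoc, metro hT, min_comm]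
    · have h1' : S ∉ N1 S' ∪ N2 S' := by
        intro h'
        rcases mem_union.mp h' with h'' | h''
        · exact h1 (mem_union_right _ (N1_symm h''))
        · exact h1 (mem_union_left _ (N2_symm h''))
      have h3' : S ∉ N3 S' := fun h' => h3 (N3_symm h')
      rw [Poff, if_neg h1, if_neg h3, Poff, if_neg h1', if_neg h3', mul_zero, mul_zero]

lemma min_exp_nonneg (a : ℝ) : 0 ≤ min (Real.exp a) 1 :=
  le_min (Real.exp_nonneg a) zero_le_one

lemma min_exp_le_one (a : ℝ) : min (Real.exp a) 1 ≤ 1 := min_le_right _ _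

lemma coeff2_nonneg (S : Finset V) :
    0 ≤ 1 / (3 * (S.card : ℝ) * ((Fintype.card V : ℝ) - (S.card : ℝ))) := by
  have h : (S.card : ℝ) ≤ (Fintype.card V : ℝ) := by
    exact_mod_cast Finset.card_le_univ S
  apply div_nonneg zero_le_one
  apply mul_nonneg (by positivity)
  linarith

lemma Poff_nonneg (C : Finset V → ℝ) (T : ℝ) (S S' : Finset V) : 0 ≤ Poff C T S S' := by
  rw [Poff]
  split_ifs with h1 h3
  · exact mul_nonneg (by positivity) (min_exp_nonneg _)
  · exact mul_nonneg (coeff2_nonneg S) (min_exp_nonneg _)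
  · exact le_refl 0

lemma Poff_le_bound (C : Finset V → ℝ) (T : ℝ) (S S' : Finset V) :
    Poff C T S S' ≤ (if S' ∈ N1 S ∪ N2 S then 2 / (3 * (Fintype.card V : ℝ)) else 0) +
      (if S' ∈ N3 S then
        1 / (3 * (S.card : ℝ) * ((Fintype.card V : ℝ) - (S.card : ℝ))) else 0) := by
  rw [Poff]
  split_ifs with h1 h3 h3'
  · exact absurd h1 (N3_not_N12 h3)
  · calc (2 / (3 * (Fintype.card V : ℝ))) * min (Real.exp ((C S - C S') / T)) 1
        ≤ (2 / (3 * (Fintype.card V : ℝ))) * 1 :=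
          mul_le_mul_of_nonneg_left (min_exp_le_one _) (by positivity)
      _ = 2 / (3 * (Fintype.card V : ℝ)) + 0 := by ring
  · calc (1 / (3 * (S.card : ℝ) * ((Fintype.card V : ℝ) - (S.card : ℝ)))) *
          min (Real.exp ((C S - C S') / T)) 1
        ≤ (1 / (3 * (S.card : ℝ) * ((Fintype.card V : ℝ) - (S.card : ℝ)))) * 1 :=
          mul_le_mul_of_nonneg_left (min_exp_le_one _) (coeff2_nonneg S)
      _ = 0 + 1 / (3 * (S.card : ℝ) * ((Fintype.card V : ℝ) - (S.card : ℝ))) := by ring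
  · simp

lemma card_N12_le (S : Finset V) : (N1 S ∪ N2 S).card ≤ Fintype.card V := by
  calc (N1 S ∪ N2 S).card ≤ (N1 S).card + (N2 S).card := card_union_le _ _
    _ ≤ Sᶜ.card + S.card := Nat.add_le_add (card_image_le) (card_image_le)
    _ ≤ Fintype.card V := by
        rw [Finset.card_compl]
        have := Finset.card_le_univ S
        omega

lemma sum_Poff_le (hn : 1 ≤ Fintype.card V) (C : Finset V → ℝ) (T : ℝ) (S : Finset V) :
    ∑ S' ∈ univ.erase S, Poff C T S S' ≤
      2 / 3 + ((N3 S).card : ℝ) *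
        (1 / (3 * (S.card : ℝ) * ((Fintype.card V : ℝ) - (S.card : ℝ)))) := by
  set b : Finset V → ℝ := fun S' =>
    (if S' ∈ N1 S ∪ N2 S then 2 / (3 * (Fintype.card V : ℝ)) else 0) +
      (if S' ∈ N3 S then
        1 / (3 * (S.card : ℝ) * ((Fintype.card V : ℝ) - (S.card : ℝ))) else 0) with hb
  have hbnn : ∀ S', 0 ≤ b S' := by
    intro S'
    apply add_nonneg <;> split_ifs
    · positivity
    · exact le_refl 0
    · exact coeff2_nonneg S
    · exact le_refl 0
  calc ∑ S' ∈ univ.erase S, Poff C T S S'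
      ≤ ∑ S' ∈ univ.erase S, b S' := Finset.sum_le_sum fun S' _ => Poff_le_bound C T S S'
    _ ≤ ∑ S' : Finset V, b S' :=
        Finset.sum_le_sum_of_subset_of_nonneg (Finset.erase_subset _ _)
          (fun S' _ _ => hbnn S')
    _ = ((N1 S ∪ N2 S).card : ℝ) * (2 / (3 * (Fintype.card V : ℝ))) +
        ((N3 S).card : ℝ) *
          (1 / (3 * (S.card : ℝ) * ((Fintype.card V : ℝ) - (S.card : ℝ)))) := by
        rw [hb]
        rw [Finset.sum_add_distrib, Finset.sum_ite_mem, Finset.sum_ite_mem,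
          Finset.univ_inter, Finset.univ_inter, Finset.sum_const, Finset.sum_const,
          nsmul_eq_mul, nsmul_eq_mul]
    _ ≤ 2 / 3 + ((N3 S).card : ℝ) *
          (1 / (3 * (S.card : ℝ) * ((Fintype.card V : ℝ) - (S.card : ℝ)))) := by
        have h1 : ((N1 S ∪ N2 S).card : ℝ) * (2 / (3 * (Fintype.card V : ℝ))) ≤ 2/3 := by
          have hle : ((N1 S ∪ N2 S).card : ℝ) ≤ (Fintype.card V : ℝ) := by
            exact_mod_cast card_N12_le S
          have hnpos : (0:ℝ) < (Fintype.card V : ℝ) := by exact_mod_cast hn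
          calc ((N1 S ∪ N2 S).card : ℝ) * (2 / (3 * (Fintype.card V : ℝ)))
              ≤ (Fintype.card V : ℝ) * (2 / (3 * (Fintype.card V : ℝ))) :=
                mul_le_mul_of_nonneg_right hle (by positivity)
            _ = 2/3 := by field_simp
        linarith

lemma N3_term_le (S : Finset V) :
    ((N3 S).card : ℝ) *
      (1 / (3 * (S.card : ℝ) * ((Fintype.card V : ℝ) - (S.card : ℝ)))) ≤ 1 / 3 := by
  have hcard : (N3 S).card ≤ Sᶜ.card * S.card := by
    calc (N3 S).card ≤ (Sᶜ ×ˢ S).card := card_image_le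
      _ = Sᶜ.card * S.card := Finset.card_product _ _
  by_cases h0 : S.card = 0 ∨ Sᶜ.card = 0
  · have : Sᶜ.card * S.card = 0 := by rcases h0 with h | h <;> simp [h]
    have hN3 : (N3 S).card = 0 := by omega
    rw [hN3]
    norm_num
  · push_neg at h0
    have hs : 0 < S.card := Nat.pos_of_ne_zero h0.1
    have hsc : 0 < Sᶜ.card := Nat.pos_of_ne_zero h0.2
    have hsub : (Fintype.card V : ℝ) - (S.card : ℝ) = (Sᶜ.card : ℝ) := by
      rw [Finset.card_compl]
      have := Finset.card_le_univ S
      push_cast [Nat.cast_sub this]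
      ring
    rw [hsub]
    have h1 : ((N3 S).card : ℝ) ≤ (Sᶜ.card : ℝ) * (S.card : ℝ) := by exact_mod_cast hcard
    have hspos : (0:ℝ) < (S.card : ℝ) := by exact_mod_cast hs
    have hscpos : (0:ℝ) < (Sᶜ.card : ℝ) := by exact_mod_cast hsc
    calc ((N3 S).card : ℝ) * (1 / (3 * (S.card : ℝ) * (Sᶜ.card : ℝ)))
        ≤ ((Sᶜ.card : ℝ) * (S.card : ℝ)) * (1 / (3 * (S.card : ℝ) * (Sᶜ.card : ℝ))) :=
          mul_le_mul_of_nonneg_right h1 (by positivity)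
      _ = 1 / 3 := by field_simp

lemma sum_Poff_le_one (hn : 1 ≤ Fintype.card V) (C : Finset V → ℝ) (T : ℝ) (S : Finset V) :
    ∑ S' ∈ univ.erase S, Poff C T S S' ≤ 1 := by
  have h := sum_Poff_le hn C T S
  have h2 := N3_term_le S
  linarith

lemma Ptrans_nonneg (hn : 1 ≤ Fintype.card V) (C : Finset V → ℝ) (T : ℝ) (S S' : Finset V) :
    0 ≤ Ptrans C T S S' := by
  rw [Ptrans]
  split_ifs with h
  · have := sum_Poff_le_one hn C T S
    linarith
  · exact Poff_nonneg C T S S'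

lemma Ptrans_row_sum (C : Finset V → ℝ) (T : ℝ) (S : Finset V) :
    ∑ S' : Finset V, Ptrans C T S S' = 1 := by
  rw [← Finset.add_sum_erase _ _ (mem_univ S)]
  have h1 : Ptrans C T S S = 1 - ∑ S'' ∈ univ.erase S, Poff C T S S'' := by
    rw [Ptrans, if_pos rfl]
  have h2 : ∑ S' ∈ univ.erase S, Ptrans C T S S' = ∑ S' ∈ univ.erase S, Poff C T S S' := by
    refine Finset.sum_congr rfl fun S' hS' => ?_
    rw [Ptrans, if_neg (Finset.ne_of_mem_erase hS')]
  rw [h1, h2]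
  ring

lemma Ptrans_rev (C : Finset V → ℝ) (T : ℝ) (hT : 0 < T) (S S' : Finset V) :
    Real.exp (-C S / T) * Ptrans C T S S' = Real.exp (-C S' / T) * Ptrans C T S' S := by
  by_cases h : S' = S
  · subst h; rfl
  · rw [Ptrans, if_neg h, Ptrans, if_neg (Ne.symm h)]
    exact Poff_rev C T hT S S'

lemma gibbs_stationary (C : Finset V → ℝ) (T : ℝ) (hT : 0 < T) (S' : Finset V) :
    ∑ S : Finset V, gibbs C T S * Ptrans C T S S' = gibbs C T S' := by
  have hZ : (0:ℝ) < ∑ S₁ : Finset V, Real.exp (-C S₁ / T) :=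
    Finset.sum_pos (fun S₁ _ => Real.exp_pos _) ⟨∅, mem_univ ∅⟩
  simp only [gibbs, div_mul_eq_mul_div, ← Finset.sum_div]
  congr 1
  calc ∑ S : Finset V, Real.exp (-C S / T) * Ptrans C T S S'
      = ∑ S : Finset V, Real.exp (-C S' / T) * Ptrans C T S' S :=
        Finset.sum_congr rfl fun S _ => Ptrans_rev C T hT S S'
    _ = Real.exp (-C S' / T) * ∑ S : Finset V, Ptrans C T S' S := by rw [Finset.mul_sum]
    _ = Real.exp (-C S' / T) := by rw [Ptrans_row_sum, mul_one]

lemma gibbs_sum_one (C : Finset V → ℝ) (T : ℝ) : ∑ S : Finset V, gibbs C T S = 1 := by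
  have hZ : (0:ℝ) < ∑ S₁ : Finset V, Real.exp (-C S₁ / T) :=
    Finset.sum_pos (fun S₁ _ => Real.exp_pos _) ⟨∅, mem_univ ∅⟩
  simp only [gibbs, ← Finset.sum_div]
  exact div_self (ne_of_gt hZ)

-- positivity of single steps
lemma Ptrans_pos_insert (hn : 1 ≤ Fintype.card V) (C : Finset V → ℝ) (T : ℝ)
    {S : Finset V} {x : V} (hx : x ∉ S) : 0 < Ptrans C T S (insert x S) := by
  rw [Ptrans, if_neg (Finset.insert_ne_self.mpr hx)]
  have hmem : insert x S ∈ N1 S ∪ N2 S :=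
    mem_union_left _ (mem_N1_iff.mpr ⟨x, hx, rfl⟩)
  rw [Poff, if_pos hmem]
  have hnpos : (0:ℝ) < (Fintype.card V : ℝ) := by exact_mod_cast hn
  exact mul_pos (by positivity) (lt_min (Real.exp_pos _) one_pos)

lemma Ptrans_pos_erase (hn : 1 ≤ Fintype.card V) (C : Finset V → ℝ) (T : ℝ)
    {S : Finset V} {x : V} (hx : x ∈ S) : 0 < Ptrans C T S (S.erase x) := by
  rw [Ptrans, if_neg (Finset.erase_ne_self.mpr hx)]
  have hmem : S.erase x ∈ N1 S ∪ N2 S :=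
    mem_union_right _ (mem_N2_iff.mpr ⟨x, hx, rfl⟩)
  rw [Poff, if_pos hmem]
  have hnpos : (0:ℝ) < (Fintype.card V : ℝ) := by exact_mod_cast hn
  exact mul_pos (by positivity) (lt_min (Real.exp_pos _) one_pos)

lemma N3_empty : N3 (∅ : Finset V) = ∅ := by
  simp [N3]

lemma Ptrans_pos_empty_diag (hn : 1 ≤ Fintype.card V) (C : Finset V → ℝ) (T : ℝ) :
    0 < Ptrans C T (∅ : Finset V) ∅ := by
  rw [Ptrans, if_pos rfl]
  have h := sum_Poff_le hn C T (∅ : Finset V)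
  rw [N3_empty] at h
  simp only [Finset.card_empty, Nat.cast_zero, zero_mul, add_zero] at h
  linarith

noncomputable def Pmat (C : Finset V → ℝ) (T : ℝ) : Matrix (Finset V) (Finset V) ℝ :=
  Matrix.of fun S₁ S₂ => Ptrans C T S₁ S₂

lemma Pmat_nonneg (hn : 1 ≤ Fintype.card V) (C : Finset V → ℝ) (T : ℝ) :
    ∀ S S' : Finset V, 0 ≤ Pmat C T S S' := fun S S' => Ptrans_nonneg hn C T S S'

lemma Pmat_pow_nonneg (hn : 1 ≤ Fintype.card V) (C : Finset V → ℝ) (T : ℝ) (m : ℕ) :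
    ∀ S S' : Finset V, 0 ≤ ((Pmat C T) ^ m) S S' :=
  pow_entry_nonneg (Pmat_nonneg hn C T) m

lemma Pmat_pow_down (hn : 1 ≤ Fintype.card V) (C : Finset V → ℝ) (T : ℝ) :
    ∀ (m : ℕ) (S : Finset V), S.card = m → 0 < ((Pmat C T) ^ m) S ∅ := by
  intro m
  induction m with
  | zero =>
    intro S hS
    rw [Finset.card_eq_zero.mp hS, pow_zero, Matrix.one_apply_eq]
    norm_num
  | succ m ih =>
    intro S hS
    obtain ⟨x, hx⟩ := Finset.card_pos.mp (by omega : 0 < S.card)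
    have h1 : 0 < Pmat C T S (S.erase x) := Ptrans_pos_erase hn C T hx
    have h2 : 0 < ((Pmat C T) ^ m) (S.erase x) ∅ :=
      ih _ (by rw [Finset.card_erase_of_mem hx]; omega)
    calc (0:ℝ) < Pmat C T S (S.erase x) * ((Pmat C T) ^ m) (S.erase x) ∅ := mul_pos h1 h2
      _ ≤ ((Pmat C T) * (Pmat C T) ^ m) S ∅ :=
          entry_mul_ge (Pmat_nonneg hn C T) (Pmat_pow_nonneg hn C T m) _ _ _
      _ = ((Pmat C T) ^ (m + 1)) S ∅ := by rw [← pow_succ']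

lemma Pmat_pow_up (hn : 1 ≤ Fintype.card V) (C : Finset V → ℝ) (T : ℝ) :
    ∀ (m : ℕ) (S : Finset V), S.card = m → 0 < ((Pmat C T) ^ m) ∅ S := by
  intro m
  induction m with
  | zero =>
    intro S hS
    rw [Finset.card_eq_zero.mp hS, pow_zero, Matrix.one_apply_eq]
    norm_num
  | succ m ih =>
    intro S hS
    obtain ⟨x, hx⟩ := Finset.card_pos.mp (by omega : 0 < S.card)
    have h2 : 0 < ((Pmat C T) ^ m) ∅ (S.erase x) :=
      ih _ (by rw [Finset.card_erase_of_mem hx]; omega)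
    have h1 : 0 < Pmat C T (S.erase x) S := by
      have := Ptrans_pos_insert hn C T (S := S.erase x) (x := x) (Finset.notMem_erase x S)
      rwa [Finset.insert_erase hx] at this
    calc (0:ℝ) < ((Pmat C T) ^ m) ∅ (S.erase x) * Pmat C T (S.erase x) S := mul_pos h2 h1
      _ ≤ ((Pmat C T) ^ m * (Pmat C T)) ∅ S :=
          entry_mul_ge (Pmat_pow_nonneg hn C T m) (Pmat_nonneg hn C T) _ _ _
      _ = ((Pmat C T) ^ (m + 1)) ∅ S := by rw [← pow_succ]

lemma Pmat_pow_loop (hn : 1 ≤ Fintype.card V) (C : Finset V → ℝ) (T : ℝ) :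
    ∀ m : ℕ, 0 < ((Pmat C T) ^ m) (∅ : Finset V) ∅ := by
  intro m
  induction m with
  | zero => rw [pow_zero, Matrix.one_apply_eq]; norm_num
  | succ m ih =>
    calc (0:ℝ) < ((Pmat C T) ^ m) ∅ ∅ * Pmat C T ∅ ∅ :=
          mul_pos ih (Ptrans_pos_empty_diag hn C T)
      _ ≤ ((Pmat C T) ^ m * (Pmat C T)) ∅ ∅ :=
          entry_mul_ge (Pmat_pow_nonneg hn C T m) (Pmat_nonneg hn C T) _ _ _
      _ = ((Pmat C T) ^ (m + 1)) ∅ ∅ := by rw [← pow_succ]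

lemma Pmat_pow_pos (hn : 1 ≤ Fintype.card V) (C : Finset V → ℝ) (T : ℝ)
    (A B : Finset V) : 0 < ((Pmat C T) ^ (2 * Fintype.card V)) A B := by
  have hA : A.card ≤ Fintype.card V := Finset.card_le_univ A
  have hB : B.card ≤ Fintype.card V := Finset.card_le_univ B
  set m : ℕ := 2 * Fintype.card V - A.card - B.card with hm
  have hsplit : 2 * Fintype.card V = A.card + (m + B.card) := by omega
  have hmb : 0 < ((Pmat C T) ^ (m + B.card)) ∅ B := by
    calc (0:ℝ) < ((Pmat C T) ^ m) ∅ ∅ * ((Pmat C T) ^ B.card) ∅ B :=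
          mul_pos (Pmat_pow_loop hn C T m) (Pmat_pow_up hn C T B.card B rfl)
      _ ≤ ((Pmat C T) ^ m * (Pmat C T) ^ B.card) ∅ B :=
          entry_mul_ge (Pmat_pow_nonneg hn C T m) (Pmat_pow_nonneg hn C T B.card) _ _ _
      _ = ((Pmat C T) ^ (m + B.card)) ∅ B := by rw [← pow_add]
  calc (0:ℝ) < ((Pmat C T) ^ A.card) A ∅ * ((Pmat C T) ^ (m + B.card)) ∅ B :=
        mul_pos (Pmat_pow_down hn C T A.card A rfl) hmb
    _ ≤ ((Pmat C T) ^ A.card * (Pmat C T) ^ (m + B.card)) A B :=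
        entry_mul_ge (Pmat_pow_nonneg hn C T A.card)
          (Pmat_pow_nonneg hn C T (m + B.card)) _ _ _
    _ = ((Pmat C T) ^ (2 * Fintype.card V)) A B := by rw [← pow_add, ← hsplit]

/-- From every initial state `S₀` the distribution of the chain
converges to the Gibbs distribution: `(P_T^t)(S₀, S) → π_T(S)` as `t → ∞`. -/
theorem Ptrans_converges_to_gibbs (hn : 1 ≤ Fintype.card V) (C : Finset V → ℝ) (T : ℝ)
    (hT : 0 < T) (S₀ : Finset V) :
    ∀ S : Finset V,
      Filter.Tendsto
        (fun t : ℕ => (((Matrix.of fun S₁ S₂ => Ptrans C T S₁ S₂) :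
          Matrix (Finset V) (Finset V) ℝ) ^ t) S₀ S)
        Filter.atTop (nhds (gibbs C T S)) := by
  intro S
  have h0 : ∀ i j : Finset V, 0 ≤ Pmat C T i j := Pmat_nonneg hn C T
  have h1 : ∀ i : Finset V, ∑ j, Pmat C T i j = 1 := fun i => Ptrans_row_sum C T i
  have hst : ∀ j : Finset V, ∑ i, gibbs C T i * Pmat C T i j = gibbs C T j :=
    fun j => gibbs_stationary C T hT j
  have hk : 1 ≤ 2 * Fintype.card V := by omega
  show Filter.Tendsto (fun t : ℕ => ((Pmat C T) ^ t) S₀ S) Filter.atTop (nhds (gibbs C T S))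
  exact markov_converge h0 h1 hst (gibbs_sum_one C T) hk (Pmat_pow_pos hn C T) S₀ S
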